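/- arXiv:2209.03930 — 2 statements merged into one kernel-verified Lean document; each statement's English description precedes it below -/
import Mathlib

section
/- For any graphs G and H, if ℓ_G = γ_P(G) and ℓ_H = γ_P(H), then γ_P(G) · γ_P(H) ≤ γ_P(G □ H). -/
open SimpleGraph

/-- The set of vertices eventually observed in the power domination process started
from `S`: first the closed neighborhood of `S` is observed (domination step), then
repeatedly any vertex that is the unique unobserved neighbor of an observed vertex
becomes observed (propagation step). -/
inductive PDObserved {V : Type*} (G : SimpleGraph V) (S : Set V) : V → Prop
  | init (v : V) (hv : v ∈ S) : PDObserved G S v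
  | dom (u v : V) (hu : u ∈ S) (h : G.Adj u v) : PDObserved G S v
  | force (u v : V) (hu : PDObserved G S u) (h : G.Adj u v)
      (hall : ∀ w, G.Adj u w → w ≠ v → PDObserved G S w) : PDObserved G S v

/-- `S` is a power dominating set of `G` if every vertex is eventually observed. -/
def IsPowerDominatingSet {V : Type*} (G : SimpleGraph V) (S : Set V) : Prop :=
  ∀ v, PDObserved G S v

/-- The power domination number: the minimum cardinality of a power dominating set. -/
noncomputable def powerDominationNumber {V : Type*} (G : SimpleGraph V) : ℕ :=
  sInf {n | ∃ S : Set V, S.ncard = n ∧ IsPowerDominatingSet G S}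

/-- A family `π` indexed by a type with at least two elements is a failed power
dominating partition of `G` if it is a partition of `V(G)` into nonempty parts and
for each part `π i`, the complement `V(G) - π i` is not a power dominating set. -/
def IsFailedPDPartition {V : Type*} (G : SimpleGraph V) {ι : Type*} (π : ι → Set V) : Prop :=
  2 ≤ Nat.card ι ∧ (∀ i, (π i).Nonempty) ∧ Pairwise (Function.onFun Disjoint π) ∧
    (⋃ i, π i) = Set.univ ∧ ∀ i, ¬ IsPowerDominatingSet G ((π i)ᶜ)

/-- `ℓ_G`: the maximum `k` such that `G` has a failed power dominating partition into
`k` parts, or `1` if no failed power dominating partition exists. -/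
noncomputable def ellPD {V : Type*} (G : SimpleGraph V) : ℕ :=
  sSup ({1} ∪ {k | ∃ π : Fin k → Set V, IsFailedPDPartition G π})

/-!
A power dominating set `S` of `G □ H` must meet every box `A ×ˢ B` for which `V(G) - A` fails
in `G` and `V(H) - B` fails in `H`: a vertex `(x, y)` with `x` unobserved from `V(G) - A` and `y`
unobserved from `V(H) - B` is never observed from `V(G □ H) - A ×ˢ B`, since each rule of the
process, read in the product, observes a vertex whose first coordinate is observed in `G` or whose
second coordinate is observed in `H`. A failed partition of `G` into `ℓ_G` parts and one of `H` into
`ℓ_H` parts give `ℓ_G · ℓ_H` pairwise disjoint such boxes, so `|S| ≥ ℓ_G · ℓ_H`. When `ℓ_G = 1`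
the single part `V(G)` serves, its complement `∅` observing nothing.
-/

open Function

namespace PDObserved

variable {V : Type*} {G : SimpleGraph V}

lemma mono {S T : Set V} (hST : S ⊆ T) {v : V} (h : PDObserved G S v) : PDObserved G T v := by
  induction h with
  | init v hv => exact .init v (hST hv)
  | dom u v hu h => exact .dom u v (hST hu) h
  | force u v _ h _ ihu ihall => exact .force u v ihu h ihall

lemma not_empty (v : V) : ¬ PDObserved G ∅ v := by
  intro h
  induction h with
  | init _ hv => exact hv
  | dom _ _ hu _ => exact hu
  | force _ _ _ _ _ ihu => exact ihu

lemma fst_or_snd_of_boxProd_compl_prod {W : Type*} {H : SimpleGraph W} {A : Set V} {B : Set W}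
    {p : V × W} (h : PDObserved (G □ H) (A ×ˢ B)ᶜ p) :
    PDObserved G Aᶜ p.1 ∨ PDObserved H Bᶜ p.2 := by
  induction h with
  | init p hp =>
    by_cases hA : p.1 ∈ A
    · exact .inr (.init _ fun hB => hp ⟨hA, hB⟩)
    · exact .inl (.init _ hA)
  | dom u v hu huv =>
    rcases boxProd_adj.mp huv with ⟨hadj, hsnd⟩ | ⟨hadj, hfst⟩
    · by_cases hA : u.1 ∈ A
      · exact .inr (hsnd ▸ .init _ fun hB => hu ⟨hA, hB⟩)
      · exact .inl (.dom _ _ hA hadj)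
    · by_cases hB : u.2 ∈ B
      · exact .inl (hfst ▸ .init _ fun hA => hu ⟨hA, hB⟩)
      · exact .inr (.dom _ _ hB hadj)
  | force u v _ huv _ ihu ihall =>
    -- If `u` is observed through the coordinate that `v` shares with it, so is `v`; otherwise
    -- every other neighbour of `u` in the same fibre is observed through the moving coordinate,
    -- and `u` forces `v` there.
    rcases boxProd_adj.mp huv with ⟨hadj, hsnd⟩ | ⟨hadj, hfst⟩
    · by_cases hu₂ : PDObserved H Bᶜ u.2
      · exact .inr (hsnd ▸ hu₂)
      refine .inl (.force u.1 v.1 (ihu.resolve_right hu₂) hadj fun w hw hwv => ?_)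
      exact (ihall (w, u.2) (boxProd_adj.mpr (.inl ⟨hw, rfl⟩))
        fun h => hwv (congrArg Prod.fst h)).resolve_right hu₂
    · by_cases hu₁ : PDObserved G Aᶜ u.1
      · exact .inl (hfst ▸ hu₁)
      refine .inr (.force u.2 v.2 (ihu.resolve_left hu₁) hadj fun w hw hwv => ?_)
      exact (ihall (u.1, w) (boxProd_adj.mpr (.inr ⟨hw, rfl⟩))
        fun h => hwv (congrArg Prod.snd h)).resolve_left hu₁

end PDObserved

section BoxProd

variable {V W : Type*} {G : SimpleGraph V} {H : SimpleGraph W}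

lemma not_isPowerDominatingSet_boxProd_compl_prod {A : Set V} {B : Set W}
    (hA : ¬ IsPowerDominatingSet G Aᶜ) (hB : ¬ IsPowerDominatingSet H Bᶜ) :
    ¬ IsPowerDominatingSet (G □ H) (A ×ˢ B)ᶜ := by
  obtain ⟨x, hx⟩ := not_forall.mp hA
  obtain ⟨y, hy⟩ := not_forall.mp hB
  exact fun hS => (hS (x, y)).fst_or_snd_of_boxProd_compl_prod.elim hx hy

lemma IsPowerDominatingSet.inter_prod_nonempty {S : Set (V × W)}
    (hS : IsPowerDominatingSet (G □ H) S) {A : Set V} {B : Set W}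
    (hA : ¬ IsPowerDominatingSet G Aᶜ) (hB : ¬ IsPowerDominatingSet H Bᶜ) :
    (S ∩ A ×ˢ B).Nonempty := by
  by_contra h
  have hS_sub : S ⊆ (A ×ˢ B)ᶜ := fun p hp hpAB => h ⟨p, hp, hpAB⟩
  exact not_isPowerDominatingSet_boxProd_compl_prod hA hB fun p => (hS p).mono hS_sub

lemma IsPowerDominatingSet.mul_le_ncard [Finite V] [Finite W] {S : Set (V × W)}
    (hS : IsPowerDominatingSet (G □ H) S) {a b : ℕ} {π : Fin a → Set V} {σ : Fin b → Set W}
    (hπ : Pairwise (Disjoint on π)) (hσ : Pairwise (Disjoint on σ))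
    (hπG : ∀ i, ¬ IsPowerDominatingSet G (π i)ᶜ) (hσH : ∀ j, ¬ IsPowerDominatingSet H (σ j)ᶜ) :
    a * b ≤ S.ncard := by
  choose f hfS hf using fun p : Fin a × Fin b => hS.inter_prod_nonempty (hπG p.1) (hσH p.2)
  have hf_inj : Injective fun p => (⟨f p, hfS p⟩ : S) := by
    intro p q hpq
    have hfpq : f p = f q := congrArg Subtype.val hpq
    exact Prod.ext
      (hπ.eq <| Set.not_disjoint_iff.mpr ⟨(f p).1, (hf p).1, hfpq ▸ (hf q).1⟩)
      (hσ.eq <| Set.not_disjoint_iff.mpr ⟨(f p).2, (hf p).2, hfpq ▸ (hf q).2⟩)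
  calc a * b = Nat.card (Fin a × Fin b) := by simp
    _ ≤ Nat.card S := Nat.card_le_card_of_injective _ hf_inj
    _ = S.ncard := Nat.card_coe_set_eq S

end BoxProd

section PowerDominationNumber

variable {V : Type*} {G : SimpleGraph V}

lemma IsPowerDominatingSet.powerDominationNumber_le {S : Set V}
    (hS : IsPowerDominatingSet G S) : powerDominationNumber G ≤ S.ncard :=
  Nat.sInf_le ⟨S, rfl, hS⟩

lemma exists_isPowerDominatingSet_ncard_eq (G : SimpleGraph V) :
    ∃ S : Set V, IsPowerDominatingSet G S ∧ S.ncard = powerDominationNumber G := by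
  have hne : {n | ∃ S : Set V, S.ncard = n ∧ IsPowerDominatingSet G S}.Nonempty :=
    ⟨_, Set.univ, rfl, fun v => .init v trivial⟩
  exact (Nat.sInf_mem hne).imp fun _ h => h.symm

lemma powerDominationNumber_eq_zero_of_isEmpty [IsEmpty V] : powerDominationNumber G = 0 :=
  Nat.eq_zero_of_le_zero <| by
    simpa using IsPowerDominatingSet.powerDominationNumber_le (G := G) (S := ∅) isEmptyElim

lemma IsFailedPDPartition.card_le [Finite V] {ι : Type*} {π : ι → Set V}
    (hπ : IsFailedPDPartition G π) : Nat.card ι ≤ Nat.card V := by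
  choose f hf using hπ.2.1
  refine Nat.card_le_card_of_injective f fun i j hij => hπ.2.2.1.eq ?_
  exact Set.not_disjoint_iff.mpr ⟨f i, hf i, hij ▸ hf j⟩

lemma exists_failed_family_of_size_ellPD [Finite V] [Nonempty V] (G : SimpleGraph V) :
    ∃ π : Fin (ellPD G) → Set V,
      Pairwise (Disjoint on π) ∧ ∀ i, ¬ IsPowerDominatingSet G (π i)ᶜ := by
  have hbdd : BddAbove ({1} ∪ {k | ∃ π : Fin k → Set V, IsFailedPDPartition G π}) := by
    refine ⟨max 1 (Nat.card V), ?_⟩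
    rintro k (rfl | ⟨π, hπ⟩)
    · exact le_max_left _ _
    · simpa using le_max_of_le_right hπ.card_le
  have hmem : ellPD G ∈ ({1} ∪ {k | ∃ π : Fin k → Set V, IsFailedPDPartition G π}) :=
    Nat.sSup_mem ⟨1, .inl rfl⟩ hbdd
  rcases hmem with h1 | ⟨π, hπ⟩
  · rw [Set.mem_singleton_iff.mp h1]
    refine ⟨fun _ => Set.univ, Subsingleton.pairwise, fun _ h => ?_⟩
    obtain ⟨v⟩ := ‹Nonempty V›
    exact PDObserved.not_empty v (Set.compl_univ (α := V) ▸ h v)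
  · exact ⟨π, hπ.2.2.1, hπ.2.2.2.2⟩

end PowerDominationNumber

/-- For any graphs `G` and `H`, if `ℓ_G = γ_P(G)` and `ℓ_H = γ_P(H)`, then
`γ_P(G) · γ_P(H) ≤ γ_P(G □ H)`. -/
theorem powerDominationNumber_mul_le_boxProd_of_ellPD_eq {V W : Type*} [Fintype V] [Fintype W]
    (G : SimpleGraph V) (H : SimpleGraph W)
    (hG : ellPD G = powerDominationNumber G) (hH : ellPD H = powerDominationNumber H) :
    powerDominationNumber G * powerDominationNumber H ≤ powerDominationNumber (G □ H) := by
  cases isEmpty_or_nonempty V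
  · simp [powerDominationNumber_eq_zero_of_isEmpty (G := G)]
  cases isEmpty_or_nonempty W
  · simp [powerDominationNumber_eq_zero_of_isEmpty (G := H)]
  obtain ⟨π, hπ, hπG⟩ := exists_failed_family_of_size_ellPD G
  obtain ⟨σ, hσ, hσH⟩ := exists_failed_family_of_size_ellPD H
  obtain ⟨S, hS, hS_card⟩ := exists_isPowerDominatingSet_ncard_eq (G □ H)
  rw [← hG, ← hH, ← hS_card]
  exact hS.mul_le_ncard hπ hσ hπG hσH
end

section
/- Let G and H be graphs, let Π = Π_1 ∪ ⋯ ∪ Π_p be a failed power dominating partition of G, and let Σ = Σ_1 ∪ ⋯ ∪ Σ_q be a failed power dominating partition of H. Then the collection {Π_i × Σ_j : 1 ≤ i ≤ p, 1 ≤ j ≤ q} is a failed power dominating partition of G □ H; in particular, for each i and j, no vertex of U_i × V_j is power dominated by V(G □ H) − (Π_i × Σ_j), where U_i is the set of vertices of Π_i not power dominated by V(G) − Π_i and V_j is the set of vertices of Σ_j not power dominated by V(H) − Σ_j. -/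
open SimpleGraph

/-!
Every vertex `(u, w)` observed in `G □ H` from `V(G □ H) − S × T` has `u` observed in `G` from
`V(G) − S` or `w` observed in `H` from `V(H) − T`. This holds along the observation process:
a vertex outside `S × T` lies in `Sᶜ × W` or in `V × Tᶜ`, and a force along a `G`-edge from a
vertex `(u, w)` with `w` unobserved in `H` is a force in `G`, because inductively every `u'`
with `(u', w)` observed is observed in `G`. Hence `U_i × V_j` stays unobserved; the rest is bookkeeping about product partitions.
-/

section

variable {V W : Type*} {G : SimpleGraph V} {H : SimpleGraph W}

theorem PDObserved.of_boxProd_compl_prod {S : Set V} {T : Set W} {x : V × W}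
    (h : PDObserved (G □ H) (S ×ˢ T)ᶜ x) : PDObserved G Sᶜ x.1 ∨ PDObserved H Tᶜ x.2 := by
  induction h with
  | init v hv =>
    rcases not_and_or.mp hv with hv | hv
    · exact .inl (.init _ hv)
    · exact .inr (.init _ hv)
  | dom u v hu huv =>
    rcases not_and_or.mp hu, huv with ⟨hu | hu, ⟨huv, hsnd⟩ | ⟨huv, hfst⟩⟩
    · exact .inl (.dom _ _ hu huv)
    · exact .inl (hfst ▸ .init _ hu)
    · exact .inr (hsnd ▸ .init _ hu)
    · exact .inr (.dom _ _ hu huv)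
  | force u v _ huv _ ih ihall =>
    rcases huv with ⟨huv, hsnd⟩ | ⟨huv, hfst⟩
    · by_cases hH : PDObserved H Tᶜ u.2
      · exact .inr (hsnd ▸ hH)
      refine .inl (.force u.1 v.1 (ih.resolve_right hH) huv fun w huw hne ↦ ?_)
      exact (ihall (w, u.2) (.inl ⟨huw, rfl⟩) (hne <| congrArg Prod.fst ·)).resolve_right hH
    · by_cases hG : PDObserved G Sᶜ u.1
      · exact .inl (hfst ▸ hG)
      refine .inr (.force u.2 v.2 (ih.resolve_left hG) huv fun w huw hne ↦ ?_)
      exact (ihall (u.1, w) (.inr ⟨huw, rfl⟩) (hne <| congrArg Prod.snd ·)).resolve_left hG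

theorem not_pdObserved_boxProd_compl_prod {S : Set V} {T : Set W} {u : V} {w : W}
    (hu : ¬ PDObserved G Sᶜ u) (hw : ¬ PDObserved H Tᶜ w) :
    ¬ PDObserved (G □ H) (S ×ˢ T)ᶜ (u, w) :=
  fun h ↦ h.of_boxProd_compl_prod.elim hu hw

theorem not_isPowerDominatingSet_boxProd_compl_prod_s5 {S : Set V} {T : Set W}
    (hS : ¬ IsPowerDominatingSet G Sᶜ) (hT : ¬ IsPowerDominatingSet H Tᶜ) :
    ¬ IsPowerDominatingSet (G □ H) (S ×ˢ T)ᶜ := by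
  obtain ⟨u, hu⟩ := not_forall.mp hS
  obtain ⟨w, hw⟩ := not_forall.mp hT
  exact fun h ↦ not_pdObserved_boxProd_compl_prod hu hw (h (u, w))

theorem IsFailedPDPartition.boxProd {ι κ : Type*} {π : ι → Set V} {σ : κ → Set W}
    (hπ : IsFailedPDPartition G π) (hσ : IsFailedPDPartition H σ) :
    IsFailedPDPartition (G □ H) fun ij : ι × κ ↦ π ij.1 ×ˢ σ ij.2 := by
  obtain ⟨hι, hπne, hπdisj, hπunion, hπfail⟩ := hπ
  obtain ⟨hκ, hσne, hσdisj, hσunion, hσfail⟩ := hσ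
  refine ⟨?_, fun ij ↦ (hπne ij.1).prod (hσne ij.2), ?_, ?_,
    fun ij ↦ not_isPowerDominatingSet_boxProd_compl_prod_s5 (hπfail ij.1) (hσfail ij.2)⟩
  · rw [Nat.card_prod]
    nlinarith
  · rintro ⟨i, j⟩ ⟨i', j'⟩ hne
    refine Set.disjoint_prod.mpr ?_
    by_cases hi : i = i'
    · exact .inr (hσdisj fun hj ↦ hne (Prod.ext hi hj))
    · exact .inl (hπdisj hi)
  · rw [Set.iUnion_prod, hπunion, hσunion, Set.univ_prod_univ]

end

theorem isFailedPDPartition_boxProd_general {V W : Type*}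
    (G : SimpleGraph V) (H : SimpleGraph W) {p q : ℕ}
    (π : Fin p → Set V) (σ : Fin q → Set W)
    (hπ : IsFailedPDPartition G π) (hσ : IsFailedPDPartition H σ) :
    IsFailedPDPartition (G □ H) (fun ij : Fin p × Fin q => π ij.1 ×ˢ σ ij.2) ∧
    ∀ (i : Fin p) (j : Fin q) (u : V) (v : W),
      u ∈ π i → ¬ PDObserved G ((π i)ᶜ) u →
      v ∈ σ j → ¬ PDObserved H ((σ j)ᶜ) v →
      ¬ PDObserved (G □ H) ((π i ×ˢ σ j)ᶜ) (u, v) :=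
  ⟨hπ.boxProd hσ, fun _ _ _ _ _ hu _ hv ↦ not_pdObserved_boxProd_compl_prod hu hv⟩

/-- If `Π = Π_1 ∪ ⋯ ∪ Π_p` is a failed power dominating partition of `G`
and `Σ = Σ_1 ∪ ⋯ ∪ Σ_q` is a failed power dominating partition of `H`, then the
collection `{Π_i × Σ_j : 1 ≤ i ≤ p, 1 ≤ j ≤ q}` is a failed power dominating partition
of `G □ H`; in particular, for each `i` and `j`, no vertex of `U_i × V_j` is power
dominated by `V(G □ H) − (Π_i × Σ_j)`, where `U_i` is the set of vertices of `Π_i` not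
power dominated by `V(G) − Π_i` and `V_j` is the set of vertices of `Σ_j` not power
dominated by `V(H) − Σ_j`. -/
theorem isFailedPDPartition_boxProd {V W : Type*} [Fintype V] [Fintype W]
    (G : SimpleGraph V) (H : SimpleGraph W) {p q : ℕ}
    (π : Fin p → Set V) (σ : Fin q → Set W)
    (hπ : IsFailedPDPartition G π) (hσ : IsFailedPDPartition H σ) :
    IsFailedPDPartition (G □ H) (fun ij : Fin p × Fin q => π ij.1 ×ˢ σ ij.2) ∧
    ∀ (i : Fin p) (j : Fin q) (u : V) (v : W),
      u ∈ π i → ¬ PDObserved G ((π i)ᶜ) u →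
      v ∈ σ j → ¬ PDObserved H ((σ j)ᶜ) v →
      ¬ PDObserved (G □ H) ((π i ×ˢ σ j)ᶜ) (u, v) :=
  isFailedPDPartition_boxProd_general G H π σ hπ hσ
end
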